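/- arXiv:1812.05398 — 3 statements merged into one kernel-verified Lean document; each statement's English description precedes it below -/
import Mathlib

section
/- Let p > 0, a > 0, N > 0, and D ≥ max{2/(a·N), (p+1)/N, 2p/N}. Define f(y) = (2 - D·a·N)·y² + 2·(p - 1 + D·N·(a-1))·y + (1 - 1/a)·(-2p - D·(a-1)·N). Then f(y) ≤ 0 for all y ≥ 1. -/
/-- R*-coefficient estimate: for `p > 0`, `a > 0`, `N > 0` and
`D ≥ max {2/(aN), (p+1)/N, 2p/N}`, the quadratic
`f(y) = (2 - D a N) y² + 2(p - 1 + D N (a-1)) y + (1 - 1/a)(-2p - D (a-1) N)`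
is nonpositive on `[1,∞)`. -/
theorem stmt_2 (p a N D : ℝ) (hp : 0 < p) (ha : 0 < a) (hN : 0 < N)
    (hD : D ≥ max (2 / (a * N)) (max ((p + 1) / N) (2 * p / N))) :
    ∀ y : ℝ, 1 ≤ y →
      (2 - D * a * N) * y ^ 2 + 2 * (p - 1 + D * N * (a - 1)) * y
          + (1 - 1 / a) * (-(2 * p) - D * (a - 1) * N) ≤ 0 := by
  intro y hy
  have h1 : 2 / (a * N) ≤ D := le_trans (le_max_left _ _) hD
  have h2 : (p + 1) / N ≤ D := le_trans (le_max_left _ _) (le_trans (le_max_right _ _) hD)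
  have h3 : 2 * p / N ≤ D := le_trans (le_max_right _ _) (le_trans (le_max_right _ _) hD)
  have haN : 0 < a * N := mul_pos ha hN
  have h1' : 2 ≤ D * (a * N) := (div_le_iff₀ haN).mp h1
  have h2' : p + 1 ≤ D * N := (div_le_iff₀ hN).mp h2
  have h3' : 2 * p ≤ D * N := (div_le_iff₀ hN).mp h3
  have ha' : (1 : ℝ) / a * a = 1 := one_div_mul_cancel ha.ne'
  nlinarith [mul_nonneg (sub_nonneg.mpr hy) (sub_nonneg.mpr h1'),
    mul_nonneg (mul_nonneg (sub_nonneg.mpr hy) (sub_nonneg.mpr hy)) (sub_nonneg.mpr h1'),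
    mul_nonneg (sub_nonneg.mpr hy) (sub_nonneg.mpr h2'),
    mul_nonneg (mul_nonneg (sub_nonneg.mpr hy) (sub_nonneg.mpr hy)) ha.le,
    mul_pos ha hp, sq_nonneg (y - 1), sq_nonneg (a - 1),
    mul_nonneg (sub_nonneg.mpr h3') (one_div_pos.mpr ha).le]
end

section
/- Let p > 0, and let g be the Bergman metric of the ellipsoid E = {(z,w) ∈ ℂ² : |z|² + |w|^{2p} < 1}, i.e. g_{i j̄} = ∂²(log K)/∂z_i ∂z̄_j where K is the Bergman kernel of E. Then at any point of the form (z, 0) ∈ E with z real, the metric components are g_{1 1̄} = (2p+1)/(p·(1 - z²)²), g_{2 2̄} = 2(p+2)/((p+1)·(1 - z²)^{1/p}), and g_{1 2̄} = g_{2 1̄} = 0. -/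
noncomputable section

/-- The Bergman kernel of `E(1,1,p)` (D'Angelo's formula), polarized as a holomorphic
function of independent complex variables `z, z̄, w, w̄`:
`K = c₁ φ^{-2+1/p} ψ^{-2} + c₂ φ^{-2+2/p} ψ^{-3}` with `φ = 1 - z z̄`,
`ψ = φ^{1/p} - w w̄`, `c₁ = (p-1)/(pπ²)`, `c₂ = 2/(pπ²)`. -/
def Kc (p : ℝ) (z zb w wb : ℂ) : ℂ :=
  (((p - 1) / (p * Real.pi ^ 2) : ℝ) : ℂ) * (1 - z * zb) ^ ((-2 + 1 / p : ℝ) : ℂ)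
      * ((1 - z * zb) ^ ((1 / p : ℝ) : ℂ) - w * wb) ^ (-2 : ℂ)
    + ((2 / (p * Real.pi ^ 2) : ℝ) : ℂ) * (1 - z * zb) ^ ((-2 + 2 / p : ℝ) : ℂ)
      * ((1 - z * zb) ^ ((1 / p : ℝ) : ℂ) - w * wb) ^ (-3 : ℂ)

/-- Wirtinger derivative `∂/∂z` (first slot). -/
def D1 (F : ℂ → ℂ → ℂ → ℂ → ℂ) : ℂ → ℂ → ℂ → ℂ → ℂ :=
  fun z zb w wb => deriv (fun t => F t zb w wb) z

/-- Wirtinger derivative `∂/∂z̄` (second slot). -/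
def D1b (F : ℂ → ℂ → ℂ → ℂ → ℂ) : ℂ → ℂ → ℂ → ℂ → ℂ :=
  fun z zb w wb => deriv (fun t => F z t w wb) zb

/-- Wirtinger derivative `∂/∂w` (third slot). -/
def D2 (F : ℂ → ℂ → ℂ → ℂ → ℂ) : ℂ → ℂ → ℂ → ℂ → ℂ :=
  fun z zb w wb => deriv (fun t => F z zb t wb) w

/-- Wirtinger derivative `∂/∂w̄` (fourth slot). -/
def D2b (F : ℂ → ℂ → ℂ → ℂ → ℂ) : ℂ → ℂ → ℂ → ℂ → ℂ :=
  fun z zb w wb => deriv (fun t => F z zb w t) wb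

/-- `log K`. -/
def logK (p : ℝ) : ℂ → ℂ → ℂ → ℂ → ℂ :=
  fun z zb w wb => Complex.log (Kc p z zb w wb)

/-- Bergman metric component `g_{1 1̄} = ∂² log K / ∂z ∂z̄`. -/
def g11 (p : ℝ) : ℂ → ℂ → ℂ → ℂ → ℂ := D1 (D1b (logK p))

/-- Bergman metric component `g_{1 2̄} = ∂² log K / ∂z ∂w̄`. -/
def g12 (p : ℝ) : ℂ → ℂ → ℂ → ℂ → ℂ := D1 (D2b (logK p))

/-- Bergman metric component `g_{2 1̄} = ∂² log K / ∂w ∂z̄`. -/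
def g21 (p : ℝ) : ℂ → ℂ → ℂ → ℂ → ℂ := D2 (D1b (logK p))

/-- Bergman metric component `g_{2 2̄} = ∂² log K / ∂w ∂w̄`. -/
def g22 (p : ℝ) : ℂ → ℂ → ℂ → ℂ → ℂ := D2 (D2b (logK p))

/-- `det g = g_{1 1̄} g_{2 2̄} - g_{1 2̄} g_{2 1̄}`. -/
def detg (p : ℝ) : ℂ → ℂ → ℂ → ℂ → ℂ :=
  fun z zb w wb => g11 p z zb w wb * g22 p z zb w wb - g12 p z zb w wb * g21 p z zb w wb

/-- `Ric_{1 1̄} = -∂² log det g / ∂z ∂z̄`. -/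
def Ric11 (p : ℝ) : ℂ → ℂ → ℂ → ℂ → ℂ :=
  fun z zb w wb =>
    -(D1 (D1b fun a b c d => Complex.log (detg p a b c d)) z zb w wb)

/-- `Ric_{1 2̄}`. -/
def Ric12 (p : ℝ) : ℂ → ℂ → ℂ → ℂ → ℂ :=
  fun z zb w wb =>
    -(D1 (D2b fun a b c d => Complex.log (detg p a b c d)) z zb w wb)

/-- `Ric_{2 1̄}`. -/
def Ric21 (p : ℝ) : ℂ → ℂ → ℂ → ℂ → ℂ :=
  fun z zb w wb =>
    -(D2 (D1b fun a b c d => Complex.log (detg p a b c d)) z zb w wb)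

/-- `Ric_{2 2̄}`. -/
def Ric22 (p : ℝ) : ℂ → ℂ → ℂ → ℂ → ℂ :=
  fun z zb w wb =>
    -(D2 (D2b fun a b c d => Complex.log (detg p a b c d)) z zb w wb)

/-!
The polarized kernel depends on `(z, z̄, w, w̄)` only through `u = z z̄` and `v = w w̄`, so each
metric coefficient is a mixed derivative `∂ₜ∂ₛ h(t s)` at `(a, b)` of a one-variable function,
namely `h'(ab) + ab h''(ab)`. On the slice `v = 0` the kernel collapses to
`(p+1)/(pπ²) · (1 - u)^(-2-1/p)`, which gives `g_{1 1̄}`. At `w = 0` the mixed derivative in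
`(w, w̄)` is just the logarithmic derivative in `v` at `v = 0` of
`A (c - v)⁻² + B (c - v)⁻³` with `c = (1 - z²)^(1/p)`, which gives `g_{2 2̄}`.
The off-diagonal terms vanish because `w = 0` or `w̄ = 0` makes `v = 0` regardless of the other
variable.
-/

open Filter Topology Complex

section MixedDerivative

variable {𝕜 : Type*} [NontriviallyNormedField 𝕜]

theorem deriv_deriv_comp_mul {h : 𝕜 → 𝕜} {a b c : 𝕜} (hh : HasDerivAt (deriv h) c (a * b)) :
    deriv (fun t => deriv (fun s => h (t * s)) b) a = deriv h (a * b) + a * b * c := by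
  have hinner : (fun t => deriv (fun s => h (t * s)) b) = fun t => t * deriv h (t * b) := by
    funext t
    exact deriv_comp_mul_left t h b
  have hcomp : HasDerivAt (fun t => deriv h (t * b)) (c * b) a :=
    HasDerivAt.comp (h₂ := deriv h) a hh (hasDerivAt_mul_const b)
  have hout : HasDerivAt (fun t => t * deriv h (t * b)) (1 * deriv h (a * b) + a * (c * b)) a :=
    (hasDerivAt_id a).mul hcomp
  rw [hinner, hout.deriv]
  ring

theorem deriv_deriv_comp_mul_zero (h : 𝕜 → 𝕜) :
    deriv (fun t => deriv (fun s => h (t * s)) 0) 0 = deriv h 0 := by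
  have hinner : (fun t => deriv (fun s => h (t * s)) 0) = fun t => t * deriv h 0 := by
    funext t
    simpa using deriv_comp_mul_left t h 0
  rw [hinner]
  simp

end MixedDerivative

theorem cpow_cpow_neg_natCast (u q : ℂ) (n : ℕ) : (u ^ q) ^ (-(n : ℂ)) = u ^ (-(n * q)) := by
  rw [cpow_neg, cpow_neg, cpow_natCast, cpow_nat_mul]

theorem hasDerivAt_log_const_mul_one_sub_cpow {C μ u : ℂ} (hu : 1 - u ∈ slitPlane)
    (hC : C * (1 - u) ^ μ ∈ slitPlane) :
    HasDerivAt (fun u => log (C * (1 - u) ^ μ)) (-μ / (1 - u)) u := by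
  have hpow : HasDerivAt (fun u => (1 - u) ^ μ) (μ * (1 - u) ^ (μ - 1) * -1) u := by
    simpa using ((hasDerivAt_id u).const_sub 1).cpow_const (c := μ) hu
  convert (hpow.const_mul C).clog hC using 1
  have hu0 : 1 - u ≠ 0 := slitPlane_ne_zero hu
  have hC0 : C ≠ 0 := left_ne_zero_of_mul (slitPlane_ne_zero hC)
  have hpow0 : (1 - u) ^ μ ≠ 0 := right_ne_zero_of_mul (slitPlane_ne_zero hC)
  rw [cpow_sub _ _ hu0, cpow_one]
  field_simp

theorem hasDerivAt_log_mul_zpow_add_mul_zpow {A B c : ℂ} (hc : c ≠ 0)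
    (hslit : A * c ^ (-2 : ℤ) + B * c ^ (-3 : ℤ) ∈ slitPlane) :
    HasDerivAt (fun v => log (A * (c - v) ^ (-2 : ℤ) + B * (c - v) ^ (-3 : ℤ)))
      ((2 * A * c + 3 * B) / (c * (A * c + B))) 0 := by
  have hzpow (n : ℤ) : HasDerivAt (fun v : ℂ => (c - v) ^ n) (n * c ^ (n - 1) * -1) 0 := by
    have hlin : HasDerivAt (fun v : ℂ => c - v) (-1) 0 := by
      simpa using (hasDerivAt_id (0 : ℂ)).const_sub c
    have hpow : HasDerivAt (fun y : ℂ => y ^ n) (n * c ^ (n - 1)) (c - 0) := by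
      rw [sub_zero]
      exact hasDerivAt_zpow n c (Or.inl hc)
    exact hpow.comp 0 hlin
  have hf : HasDerivAt (fun v => A * (c - v) ^ (-2 : ℤ) + B * (c - v) ^ (-3 : ℤ))
      (A * ((-2 : ℤ) * c ^ ((-2 : ℤ) - 1) * -1) + B * ((-3 : ℤ) * c ^ ((-3 : ℤ) - 1) * -1)) 0 :=
    ((hzpow (-2)).const_mul A).add ((hzpow (-3)).const_mul B)
  have hsum : A * c + B ≠ 0 := by
    intro h0
    apply slitPlane_ne_zero hslit
    rw [show A * c ^ (-2 : ℤ) + B * c ^ (-3 : ℤ) = (A * c + B) * c ^ (-3 : ℤ) by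
      rw [show (-2 : ℤ) = -3 + 1 by norm_num, zpow_add_one₀ hc]; ring, h0, zero_mul]
  convert hf.clog (by simpa using hslit) using 1
  simp only [sub_zero, zpow_neg]
  norm_num
  field_simp

def bergmanProfile (p : ℝ) (u v : ℂ) : ℂ :=
  (((p - 1) / (p * Real.pi ^ 2) : ℝ) : ℂ) * (1 - u) ^ ((-2 + 1 / p : ℝ) : ℂ)
      * ((1 - u) ^ ((1 / p : ℝ) : ℂ) - v) ^ (-2 : ℂ)
    + ((2 / (p * Real.pi ^ 2) : ℝ) : ℂ) * (1 - u) ^ ((-2 + 2 / p : ℝ) : ℂ)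
      * ((1 - u) ^ ((1 / p : ℝ) : ℂ) - v) ^ (-3 : ℂ)

theorem Kc_eq_bergmanProfile (p : ℝ) (z zb w wb : ℂ) :
    Kc p z zb w wb = bergmanProfile p (z * zb) (w * wb) :=
  rfl

theorem bergmanProfile_zero_right (p : ℝ) {u : ℂ} (hu : 1 - u ≠ 0) :
    bergmanProfile p u 0 =
      (((p + 1) / (p * Real.pi ^ 2) : ℝ) : ℂ) * (1 - u) ^ ((-2 - 1 / p : ℝ) : ℂ) := by
  have h2 : ((1 - u) ^ ((1 / p : ℝ) : ℂ)) ^ (-2 : ℂ) = (1 - u) ^ ((-(2 / p) : ℝ) : ℂ) := by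
    simpa [div_eq_mul_inv] using cpow_cpow_neg_natCast (1 - u) ((1 / p : ℝ) : ℂ) 2
  have h3 : ((1 - u) ^ ((1 / p : ℝ) : ℂ)) ^ (-3 : ℂ) = (1 - u) ^ ((-(3 / p) : ℝ) : ℂ) := by
    simpa [div_eq_mul_inv] using cpow_cpow_neg_natCast (1 - u) ((1 / p : ℝ) : ℂ) 3
  simp only [bergmanProfile, sub_zero, h2, h3, mul_assoc, ← cpow_add _ _ hu]
  push_cast
  ring_nf

theorem bergmanProfile_one_sub_ofReal (p : ℝ) {x : ℝ} (hx : 0 < x) (v : ℂ) :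
    bergmanProfile p (1 - x) v =
      (((p - 1) / (p * Real.pi ^ 2) * x ^ (-2 + 1 / p) : ℝ) : ℂ)
          * ((x ^ (1 / p) : ℝ) - v) ^ (-2 : ℤ)
        + ((2 / (p * Real.pi ^ 2) * x ^ (-2 + 2 / p) : ℝ) : ℂ)
          * ((x ^ (1 / p) : ℝ) - v) ^ (-3 : ℤ) := by
  simp only [bergmanProfile, sub_sub_cancel, ← ofReal_cpow hx.le]
  rw [show (-2 : ℂ) = ((-2 : ℤ) : ℂ) by norm_num, show (-3 : ℂ) = ((-3 : ℤ) : ℂ) by norm_num,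
    cpow_intCast, cpow_intCast]
  push_cast
  ring

theorem deriv_log_bergmanProfile_zero_right_eventuallyEq (p : ℝ) {u₀ : ℂ}
    (hu₀ : 1 - u₀ ∈ slitPlane)
    (hK : (((p + 1) / (p * Real.pi ^ 2) : ℝ) : ℂ) * (1 - u₀) ^ ((-2 - 1 / p : ℝ) : ℂ) ∈ slitPlane) :
    deriv (fun u => log (bergmanProfile p u 0)) =ᶠ[𝓝 u₀]
      fun u => -((-2 - 1 / p : ℝ) : ℂ) / (1 - u) := by
  have hcont : ContinuousAt (fun u : ℂ => 1 - u) u₀ := by fun_prop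
  have hnear : ∀ᶠ u in 𝓝 u₀, 1 - u ∈ slitPlane ∧
      (((p + 1) / (p * Real.pi ^ 2) : ℝ) : ℂ) * (1 - u) ^ ((-2 - 1 / p : ℝ) : ℂ) ∈ slitPlane :=
    (hcont.eventually_mem (isOpen_slitPlane.mem_nhds hu₀)).and
      ((continuousAt_const.mul (hcont.cpow continuousAt_const hu₀)).eventually_mem
        (isOpen_slitPlane.mem_nhds hK))
  filter_upwards [hnear.eventually_nhds] with u hu
  refine ((hasDerivAt_log_const_mul_one_sub_cpow hu.self_of_nhds.1
    hu.self_of_nhds.2).congr_of_eventuallyEq ?_).deriv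
  filter_upwards [hu] with y hy
  rw [bergmanProfile_zero_right p (slitPlane_ne_zero hy.1)]

theorem g11_ofReal {p : ℝ} (hp : 0 < p) {z : ℝ} (hz : z ^ 2 < 1) :
    g11 p (z : ℂ) (z : ℂ) 0 0 = (((2 * p + 1) / (p * (1 - z ^ 2) ^ 2) : ℝ) : ℂ) := by
  have hx : 0 < 1 - z ^ 2 := by linarith
  have h1 : 1 - (z : ℂ) * z = ((1 - z ^ 2 : ℝ) : ℂ) := by push_cast; ring
  set μ : ℂ := ((-2 - 1 / p : ℝ) : ℂ)
  have hslit : 1 - (z : ℂ) * z ∈ slitPlane := h1 ▸ ofReal_mem_slitPlane.2 hx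
  have hK : (((p + 1) / (p * Real.pi ^ 2) : ℝ) : ℂ) * (1 - (z : ℂ) * z) ^ μ ∈ slitPlane := by
    rw [h1, ← ofReal_cpow hx.le, ← ofReal_mul]
    exact ofReal_mem_slitPlane.2 (by positivity)
  have hderivEq := deriv_log_bergmanProfile_zero_right_eventuallyEq p hslit hK
  have hderiv' : HasDerivAt (deriv fun u => log (bergmanProfile p u 0))
      (-μ / (1 - (z : ℂ) * z) ^ 2) ((z : ℂ) * z) := by
    have hinv := (((hasDerivAt_id' ((z : ℂ) * z)).const_sub 1).inv
      (slitPlane_ne_zero hslit)).const_mul (-μ)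
    simp only [div_eq_mul_inv] at hderivEq ⊢
    exact (hinv.congr_deriv (by ring)).congr_of_eventuallyEq hderivEq
  simp only [g11, D1, D1b, logK, Kc_eq_bergmanProfile, mul_zero]
  rw [deriv_deriv_comp_mul hderiv', hderivEq.eq_of_nhds, h1]
  have hx0 : ((1 - z ^ 2 : ℝ) : ℂ) ≠ 0 := ofReal_ne_zero.2 hx.ne'
  have hp0 : (p : ℂ) ≠ 0 := ofReal_ne_zero.2 hp.ne'
  simp only [μ]
  push_cast at hx0 ⊢
  field_simp
  ring

theorem g22_ofReal {p : ℝ} (hp : 0 < p) {z : ℝ} (hz : z ^ 2 < 1) :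
    g22 p (z : ℂ) (z : ℂ) 0 0 = ((2 * (p + 2) / ((p + 1) * (1 - z ^ 2) ^ (1 / p)) : ℝ) : ℂ) := by
  set x := 1 - z ^ 2 with hxdef
  have hx : 0 < x := by linarith
  set A := (p - 1) / (p * Real.pi ^ 2) * x ^ (-2 + 1 / p)
  set B := 2 / (p * Real.pi ^ 2) * x ^ (-2 + 2 / p)
  set c := x ^ (1 / p)
  have hc : 0 < c := Real.rpow_pos_of_pos hx _
  have hslit : (A : ℂ) * (c : ℂ) ^ (-2 : ℤ) + (B : ℂ) * (c : ℂ) ^ (-3 : ℤ) ∈ slitPlane := by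
    have h0 := bergmanProfile_one_sub_ofReal p hx 0
    rw [bergmanProfile_zero_right p (by simpa using hx.ne'), sub_sub_cancel,
      ← ofReal_cpow hx.le, ← ofReal_mul] at h0
    simp only [sub_zero] at h0
    rw [← h0]
    exact ofReal_mem_slitPlane.2 (by positivity)
  have hlog : HasDerivAt (fun v => log (bergmanProfile p (1 - x) v))
      ((2 * A * c + 3 * B) / (c * (A * c + B)) : ℝ) 0 := by
    simp only [bergmanProfile_one_sub_ofReal p hx]
    convert hasDerivAt_log_mul_zpow_add_mul_zpow (ofReal_ne_zero.2 hc.ne') hslit using 1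
    push_cast
    rfl
  have hratio : (2 * A * c + 3 * B) / (c * (A * c + B)) = 2 * (p + 2) / ((p + 1) * c) := by
    have hAc : A * c = (p - 1) / (p * Real.pi ^ 2) * x ^ (-2 + 2 / p) := by
      rw [mul_assoc, ← Real.rpow_add hx, show -2 + 1 / p + 1 / p = -2 + 2 / p by ring]
    have hy : 0 < x ^ (-2 + 2 / p) := Real.rpow_pos_of_pos hx _
    have hB : B = 2 / (p * Real.pi ^ 2) * x ^ (-2 + 2 / p) := rfl
    have hp1 : p - 1 + 2 ≠ 0 := by linarith
    rw [mul_assoc 2 A c, hAc, hB]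
    field_simp
    ring
  have h1 : (z : ℂ) * z = 1 - (x : ℂ) := by rw [hxdef]; push_cast; ring
  simp only [g22, D2, D2b, logK, Kc_eq_bergmanProfile, h1]
  rw [deriv_deriv_comp_mul_zero (fun v => log (bergmanProfile p (1 - x) v)), hlog.deriv, hratio]

theorem g12_zero_zero (p : ℝ) (z zb : ℂ) : g12 p z zb 0 0 = 0 := by
  simp [g12, D1, D2b, logK, Kc_eq_bergmanProfile]

theorem g21_zero_zero (p : ℝ) (z zb : ℂ) : g21 p z zb 0 0 = 0 := by
  simp [g21, D2, D1b, logK, Kc_eq_bergmanProfile]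

/-- Bergman metric components of `E(1,1,p)` at `(z,0)` with `z` real:
`g_{1 1̄} = (2p+1)/(p(1-z²)²)`, `g_{2 2̄} = 2(p+2)/((p+1)(1-z²)^{1/p})`,
`g_{1 2̄} = g_{2 1̄} = 0`. -/
theorem stmt_4 (p : ℝ) (hp : 0 < p) (z : ℝ) (hz : z ^ 2 < 1) :
    g11 p (z : ℂ) (z : ℂ) 0 0 = (((2 * p + 1) / (p * (1 - z ^ 2) ^ 2) : ℝ) : ℂ) ∧
      g22 p (z : ℂ) (z : ℂ) 0 0 =
        ((2 * (p + 2) / ((p + 1) * (1 - z ^ 2) ^ (1 / p)) : ℝ) : ℂ) ∧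
      g12 p (z : ℂ) (z : ℂ) 0 0 = 0 ∧ g21 p (z : ℂ) (z : ℂ) 0 0 = 0 :=
  ⟨g11_ofReal hp hz, g22_ofReal hp hz, g12_zero_zero p z z, g21_zero_zero p z z⟩
end
end

section
/- Let p > 0 and let K be the Bergman kernel of E = {(z,w) ∈ ℂ² : |z|² + |w|^{2p} < 1}, given by K(z,w) = [(p-1)/(pπ²)]·(1-|z|²)^{-2+1/p}·ψ^{-2} + [2/(pπ²)]·(1-|z|²)^{-2+2/p}·ψ^{-3} with ψ = (1-|z|²)^{1/p} - |w|². Then K(z,w) > 0 for all (z,w) ∈ E. -/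
/-!
With `φ = 1 - |z|²` and `ψ = φ^{1/p} - |w|²`, the kernel factors as
`φ^{-2+1/p} ψ^{-3} / (pπ²) · ((p - 1) ψ + 2 φ^{1/p})`. On `E` one has `0 < ψ ≤ φ^{1/p}`,
so the last factor is at least `(p + 1) ψ > 0`.
-/

open Real

lemma sq_lt_rpow_one_div_of_rpow_two_mul_lt {a b p : ℝ} (ha : 0 ≤ a) (hb : 0 ≤ b) (hp : 0 < p)
    (h : a ^ (2 * p) < b) : a ^ 2 < b ^ (1 / p) := by
  rw [rpow_mul ha, rpow_two] at h
  rwa [one_div, lt_rpow_inv_iff_of_pos (sq_nonneg a) hb hp]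

lemma kernel_expr_eq_mul (p c φ ψ : ℝ) (hφ : 0 < φ) (hψ : 0 < ψ) :
    (p - 1) / c * φ ^ (-2 + 1 / p) * ψ ^ (-2 : ℝ) + 2 / c * φ ^ (-2 + 2 / p) * ψ ^ (-3 : ℝ)
      = φ ^ (-2 + 1 / p) * ψ ^ (-3 : ℝ) / c * ((p - 1) * ψ + 2 * φ ^ (1 / p)) := by
  have hφ_exp : φ ^ (-2 + 2 / p) = φ ^ (-2 + 1 / p) * φ ^ (1 / p) := by
    rw [← rpow_add hφ]; ring_nf
  have hψ_exp : ψ ^ (-2 : ℝ) = ψ ^ (-3 : ℝ) * ψ := by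
    rw [show (-2 : ℝ) = -3 + 1 by norm_num, rpow_add hψ, rpow_one]
  rw [hφ_exp, hψ_exp]
  ring

lemma kernel_expr_pos {p c φ ψ : ℝ} (hp : -1 < p) (hc : 0 < c) (hφ : 0 < φ) (hψ : 0 < ψ)
    (hψφ : ψ ≤ φ ^ (1 / p)) :
    0 < (p - 1) / c * φ ^ (-2 + 1 / p) * ψ ^ (-2 : ℝ)
      + 2 / c * φ ^ (-2 + 2 / p) * ψ ^ (-3 : ℝ) := by
  have hbracket : 0 < (p - 1) * ψ + 2 * φ ^ (1 / p) := by nlinarith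
  rw [kernel_expr_eq_mul p c φ ψ hφ hψ]
  exact mul_pos (div_pos (mul_pos (rpow_pos_of_pos hφ _) (rpow_pos_of_pos hψ _)) hc) hbracket

/-- The explicit Bergman kernel of `E(1,1,p)` is positive on `E`: for `p > 0` and
`(z,w)` with `|z|² + |w|^{2p} < 1`, writing `φ = 1 - |z|²`, `ψ = φ^{1/p} - |w|²`,
`K = (p-1)/(pπ²) · φ^{-2+1/p} ψ^{-2} + 2/(pπ²) · φ^{-2+2/p} ψ^{-3} > 0`. -/
theorem stmt_13 (p : ℝ) (hp : 0 < p) (z w : ℂ)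
    (hzw : ‖z‖ ^ 2 + ‖w‖ ^ (2 * p) < 1) :
    0 < (p - 1) / (p * Real.pi ^ 2) * (1 - ‖z‖ ^ 2) ^ (-2 + 1 / p) *
          ((1 - ‖z‖ ^ 2) ^ (1 / p) - ‖w‖ ^ 2) ^ (-2 : ℝ)
        + 2 / (p * Real.pi ^ 2) * (1 - ‖z‖ ^ 2) ^ (-2 + 2 / p) *
          ((1 - ‖z‖ ^ 2) ^ (1 / p) - ‖w‖ ^ 2) ^ (-3 : ℝ) := by
  have hφ : 0 < 1 - ‖z‖ ^ 2 := by
    have : 0 ≤ ‖w‖ ^ (2 * p) := rpow_nonneg (norm_nonneg w) _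
    linarith
  have hw : ‖w‖ ^ 2 < (1 - ‖z‖ ^ 2) ^ (1 / p) :=
    sq_lt_rpow_one_div_of_rpow_two_mul_lt (norm_nonneg w) hφ.le hp (by linarith)
  exact kernel_expr_pos (by linarith) (by positivity) hφ (sub_pos.mpr hw)
    (sub_le_self _ (sq_nonneg _))
end
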